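/- Consider the workflow net N_c with places {i, p, r, f} and transitions t_i (consumes 1 from i, produces c+1 in p), t_r (consumes c from p, produces 1 in r), and t_f (consumes 1 from p and 1 from r, produces 1 in f), where arc weights are allowed. Then N_c is k-sound for every k ∈ [1..c−1] but not c-sound. -/

import Mathlib

structure PetriNet (P T : Type) [Fintype P] [Fintype T] where
  pre : T → P → ℕ
  post : T → P → ℕ

variable {P T : Type} [Fintype P] [Fintype T] [DecidableEq P]

namespace PetriNet

def enabled (N : PetriNet P T) (t : T) (m : P → ℕ) : Prop := ∀ p, N.pre t p ≤ m p

def fires (N : PetriNet P T) (m m' : P → ℕ) : Prop :=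
  ∃ t, N.enabled t m ∧ ∀ p, m' p = m p + N.post t p - N.pre t p

def reach (N : PetriNet P T) : (P → ℕ) → (P → ℕ) → Prop := Relation.ReflTransGen N.fires

def zfires (N : PetriNet P T) (m m' : P → ℤ) : Prop :=
  ∃ t, ∀ p, m' p = m p + (N.post t p : ℤ) - (N.pre t p : ℤ)

def zreach (N : PetriNet P T) : (P → ℤ) → (P → ℤ) → Prop := Relation.ReflTransGen N.zfires

def cfires (N : PetriNet P T) (m m' : P → ℚ) : Prop :=
  ∃ t, ∃ l : ℚ, 0 < l ∧ l ≤ 1 ∧ (∀ p, l * (N.pre t p : ℚ) ≤ m p) ∧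
    ∀ p, m' p = m p + l * ((N.post t p : ℚ) - (N.pre t p : ℚ))

def creach (N : PetriNet P T) : (P → ℚ) → (P → ℚ) → Prop := Relation.ReflTransGen N.cfires

def bounded (N : PetriNet P T) (m : P → ℕ) : Prop :=
  ∃ b : ℕ, ∀ m', N.reach m m' → ∀ p, m' p ≤ b

def zbounded (N : PetriNet P T) (m : P → ℕ) : Prop :=
  ∃ b : ℕ, ∀ m' : P → ℤ, N.zreach (fun p => (m p : ℤ)) m' → (∀ p, 0 ≤ m' p) →
    ∀ p, m' p ≤ (b : ℤ)

def quasiLive (N : PetriNet P T) (m : P → ℕ) (t : T) : Prop :=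
  ∃ m', N.reach m m' ∧ N.enabled t m'

def live (N : PetriNet P T) (m : P → ℕ) (t : T) : Prop :=
  ∀ m', N.reach m m' → N.quasiLive m' t

def freeChoice (N : PetriNet P T) : Prop :=
  ∀ s t : T, (∀ p, N.pre s p = 0 ∨ N.pre t p = 0) ∨ N.pre s = N.pre t

def edge (N : PetriNet P T) : (P ⊕ T) → (P ⊕ T) → Prop
  | Sum.inl p, Sum.inr t => 0 < N.pre t p
  | Sum.inr t, Sum.inl p => 0 < N.post t p
  | _, _ => False

end PetriNet

/-- The marking with `k` tokens in place `p` and none elsewhere. -/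
def mk1 (p : P) (k : ℕ) : P → ℕ := fun q => if q = p then k else 0

/-- The continuous marking with `k` tokens in place `p` and none elsewhere. -/
def mkQ (p : P) (k : ℚ) : P → ℚ := fun q => if q = p then k else 0

/-- `k`-soundness of a Petri net with designated initial and final places. -/
def ksoundAt (N : PetriNet P T) (i f : P) (k : ℕ) : Prop :=
  ∀ m, N.reach (mk1 i k) m → N.reach m (mk1 f k)

inductive Pl13 | i | p | r | f
deriving DecidableEq

instance instFintypePl13 : Fintype Pl13 :=
  ⟨{.i, .p, .r, .f}, fun x => by cases x <;> simp⟩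

inductive Tr13 | ti | tr | tf
deriving DecidableEq

instance instFintypeTr13 : Fintype Tr13 :=
  ⟨{.ti, .tr, .tf}, fun x => by cases x <;> simp⟩

def N13 (c : ℕ) : PetriNet Pl13 Tr13 where
  pre := fun t q => match t, q with
    | .ti, .i => 1
    | .tr, .p => c
    | .tf, .p => 1
    | .tf, .r => 1
    | _, _ => 0
  post := fun t q => match t, q with
    | .ti, .p => c + 1
    | .tr, .r => 1
    | .tf, .f => 1
    | _, _ => 0

/-!
Weighting `i, p, r, f` by `c + 1, 1, c, c + 1` gives a place invariant, so every marking reachable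
from `k` tokens in `i` satisfies `(c+1)·i + p + c·r + (c+1)·f = (c+1)·k`. After emptying `i`, the
tokens still missing in `f` number `n = k - f`, and `p + c·r = (c+1)·n`. If `r > 0`, then `p > 0`,
for otherwise `c ∣ n` with `0 < n < c`; so `t_f` fires. If `r = 0`, then `p = (c+1)·n`, and `t_r`
followed by `t_f` fires. Either way `n` drops by one, until the final marking is reached. For
`k = c` the net can instead put all `c(c+1)` tokens of `p` into `r`, which enables nothing.
-/

open Matrix

namespace PetriNet

omit [DecidableEq P] in
theorem dotProduct_eq_of_fires {N : PetriNet P T} {x m m' : P → ℕ}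
    (hx : ∀ t, x ⬝ᵥ N.pre t = x ⬝ᵥ N.post t) (h : N.fires m m') : x ⬝ᵥ m' = x ⬝ᵥ m := by
  obtain ⟨t, hen, hm'⟩ := h
  have hsum : m' + N.pre t = m + N.post t := by
    funext p
    simp only [Pi.add_apply, hm' p]
    have := hen p
    omega
  have := congrArg (x ⬝ᵥ ·) hsum
  simp only [dotProduct_add, hx] at this
  omega

omit [DecidableEq P] in
theorem dotProduct_eq_of_reach {N : PetriNet P T} {x m m' : P → ℕ}
    (hx : ∀ t, x ⬝ᵥ N.pre t = x ⬝ᵥ N.post t) (h : N.reach m m') : x ⬝ᵥ m' = x ⬝ᵥ m := by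
  induction h with
  | refl => rfl
  | tail _ hstep ih => exact (dotProduct_eq_of_fires hx hstep).trans ih

omit [DecidableEq P] in
theorem eq_of_reach_of_forall_not_enabled {N : PetriNet P T} {m m' : P → ℕ}
    (hdead : ∀ t, ¬ N.enabled t m) (h : N.reach m m') : m' = m := by
  rcases Relation.ReflTransGen.cases_head h with rfl | ⟨_, ⟨t, hen, _⟩, _⟩
  · rfl
  · exact absurd hen (hdead t)

end PetriNet

namespace N13

def marking (a b d e : ℕ) : Pl13 → ℕ
  | .i => a | .p => b | .r => d | .f => e

theorem eq_marking (m : Pl13 → ℕ) : m = marking (m .i) (m .p) (m .r) (m .f) := by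
  funext q; cases q <;> rfl

theorem mk1_i (k : ℕ) : mk1 Pl13.i k = marking k 0 0 0 := by
  funext q; cases q <;> rfl

theorem mk1_f (k : ℕ) : mk1 Pl13.f k = marking 0 0 0 k := by
  funext q; cases q <;> rfl

theorem sum_places (g : Pl13 → ℕ) : ∑ q, g q = g .i + g .p + g .r + g .f := by
  show Finset.sum {.i, .p, .r, .f} g = _
  simp [add_assoc]

variable {c : ℕ}

def invariant (c : ℕ) : Pl13 → ℕ := marking (c + 1) 1 c (c + 1)

theorem invariant_dotProduct_pre_eq_post (t : Tr13) :
    invariant c ⬝ᵥ (N13 c).pre t = invariant c ⬝ᵥ (N13 c).post t := by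
  cases t <;> simp [dotProduct, sum_places, invariant, marking, N13, add_comm]

theorem invariant_dotProduct_marking (a b d e : ℕ) :
    invariant c ⬝ᵥ marking a b d e = (c + 1) * a + b + c * d + (c + 1) * e := by
  simp [dotProduct, sum_places, invariant, marking]

theorem fires_ti (a b d e : ℕ) :
    (N13 c).fires (marking (a + 1) b d e) (marking a (b + (c + 1)) d e) :=
  ⟨.ti, fun q => by cases q <;> simp [N13, marking],
    fun q => by cases q <;> simp [N13, marking]⟩

theorem fires_tr (a b d e : ℕ) :
    (N13 c).fires (marking a (b + c) d e) (marking a b (d + 1) e) :=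
  ⟨.tr, fun q => by cases q <;> simp [N13, marking],
    fun q => by cases q <;> simp [N13, marking]⟩

theorem fires_tf (a b d e : ℕ) :
    (N13 c).fires (marking a (b + 1) (d + 1) e) (marking a b d (e + 1)) :=
  ⟨.tf, fun q => by cases q <;> simp [N13, marking],
    fun q => by cases q <;> simp [N13, marking]⟩

theorem reach_fire_ti (a b d e : ℕ) :
    (N13 c).reach (marking a b d e) (marking 0 (b + a * (c + 1)) d e) := by
  induction a generalizing b with
  | zero => rw [zero_mul, add_zero]; exact .refl
  | succ a ih =>
    rw [show b + (a + 1) * (c + 1) = b + (c + 1) + a * (c + 1) by ring]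
    exact .head (fires_ti a b d e) (ih _)

theorem reach_fire_tr (j b d e : ℕ) :
    (N13 c).reach (marking 0 (b + j * c) d e) (marking 0 b (d + j) e) := by
  induction j generalizing d with
  | zero => rw [zero_mul, add_zero, add_zero]; exact .refl
  | succ j ih =>
    rw [show b + (j + 1) * c = b + j * c + c by ring, show d + (j + 1) = d + 1 + j by ring]
    exact .head (fires_tr 0 _ d e) (ih _)

theorem reach_final {n : ℕ} (hn : n < c) {b d e : ℕ} (h : b + c * d = (c + 1) * n) :
    (N13 c).reach (marking 0 b d e) (marking 0 0 0 (e + n)) := by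
  induction n generalizing b d e with
  | zero =>
    obtain ⟨rfl, rfl⟩ : b = 0 ∧ d = 0 := by
      constructor <;> nlinarith
    exact .refl
  | succ n ih =>
    rw [show e + (n + 1) = (e + 1) + n by ring]
    rcases Nat.eq_zero_or_pos d with rfl | hd
    · obtain ⟨b, rfl⟩ : ∃ b', b = b' + 1 + c := ⟨(c + 1) * n, by linarith⟩
      refine .head (fires_tr 0 (b + 1) 0 e) (.head (fires_tf 0 b 0 e) (ih (by omega) ?_))
      linarith
    · obtain ⟨d, rfl⟩ := Nat.exists_eq_add_of_le' hd
      have hb : b ≠ 0 := by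
        rintro rfl
        have hdvd : c ∣ n + 1 := by
          have : c ∣ c * (n + 1) + (n + 1) := ⟨d + 1, by linarith⟩
          exact (Nat.dvd_add_right (dvd_mul_right c _)).mp this
        exact absurd (Nat.le_of_dvd n.succ_pos hdvd) (by omega)
      obtain ⟨b, rfl⟩ := Nat.exists_eq_succ_of_ne_zero hb
      refine .head (fires_tf 0 b d e) (ih (by omega) ?_)
      linarith

theorem reach_mk1_f_of_reach {k : ℕ} (hk : k < c) {m : Pl13 → ℕ}
    (hm : (N13 c).reach (mk1 .i k) m) : (N13 c).reach m (mk1 .f k) := by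
  have hinv := PetriNet.dotProduct_eq_of_reach invariant_dotProduct_pre_eq_post hm
  rw [eq_marking m, mk1_i, invariant_dotProduct_marking, invariant_dotProduct_marking]
    at hinv
  simp only [mul_zero, add_zero] at hinv
  obtain ⟨n, rfl⟩ := Nat.exists_eq_add_of_le (show m .f ≤ k by nlinarith)
  rw [eq_marking m, mk1_f]
  exact (reach_fire_ti _ _ _ _).trans (reach_final (by omega) (by linarith))

theorem reach_deadlock : (N13 c).reach (mk1 .i c) (marking 0 0 (c + 1) 0) := by
  have hti := reach_fire_ti (c := c) c 0 0 0
  have htr := reach_fire_tr (c := c) (c + 1) 0 0 0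
  rw [zero_add, mul_comm] at hti
  rw [zero_add, zero_add] at htr
  rw [mk1_i]
  exact hti.trans htr

theorem not_enabled_deadlock (hc : 1 ≤ c) (t : Tr13) :
    ¬ (N13 c).enabled t (marking 0 0 (c + 1) 0) := by
  intro hen
  cases t
  · simpa [N13, marking] using hen .i
  · simpa [N13, marking] using (hen .p).trans_lt' hc
  · simpa [N13, marking] using hen .p

end N13

theorem stmt13 (c : ℕ) (hc : 1 ≤ c) :
    (∀ k : ℕ, 1 ≤ k → k ≤ c - 1 → ksoundAt (N13 c) Pl13.i Pl13.f k) ∧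
    ¬ ksoundAt (N13 c) Pl13.i Pl13.f c := by
  refine ⟨fun k _ hk m hm => N13.reach_mk1_f_of_reach (by omega) hm, fun hsound => ?_⟩
  have hfinal := PetriNet.eq_of_reach_of_forall_not_enabled (N13.not_enabled_deadlock hc)
    (hsound _ N13.reach_deadlock)
  simpa [mk1, N13.marking] using congrFun hfinal .r
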